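/- If K, K̃ ∈ ℝ^{N×N} are symmetric PSD matrices with ‖K̃ − K‖₂ ≤ ε², and Tr(K) ≤ 1+ρ and Tr(K̃) ≤ 1+ρ, and D is a diagonal matrix with ±1 entries, then ‖√K̃ D √K̃ − √K D √K‖_F ≤ 2(1+ρ)ε. -/

import Mathlib

open Matrix

/-- The spectral (ℓ₂ operator) norm of a square real matrix. -/
noncomputable def specNorm {N : ℕ} (A : Matrix (Fin N) (Fin N) ℝ) : ℝ :=
  ‖Matrix.toEuclideanCLM (𝕜 := ℝ) A‖

/-- The Frobenius norm of a real matrix. -/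
noncomputable def frobNorm {m n : Type*} [Fintype m] [Fintype n]
    (A : Matrix m n ℝ) : ℝ :=
  Real.sqrt (∑ i, ∑ j, A i j ^ 2)

open scoped ComplexOrder in
/-- The positive semidefinite square root of a positive semidefinite matrix
(the definition `Matrix.PosSemidef.sqrt` of the older Mathlib, since removed). -/
noncomputable def Matrix.PosSemidef.sqrt {n 𝕜 : Type*} [Fintype n] [DecidableEq n] [RCLike 𝕜]
    {A : Matrix n n 𝕜} (hA : A.PosSemidef) : Matrix n n 𝕜 :=
  hA.1.eigenvectorUnitary.1 * diagonal ((↑) ∘ Real.sqrt ∘ hA.1.eigenvalues) *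
    (star hA.1.eigenvectorUnitary : Matrix n n 𝕜)

/-!
Write `S = √K` and `S̃ = √K̃`. Then `S̃DS̃ - SDS = S̃D(S̃ - S) + (S̃ - S)DS`, the Frobenius norm of
a product is at most the Frobenius norm of one factor times the operator norm of the other,
`‖D‖₂ = 1` and `‖S‖_F = √(Tr K) ≤ 1 + ρ`.

The bound `‖S̃ - S‖₂ ≤ √‖K̃ - K‖₂` is read off an eigenvalue `μ` of the symmetric matrix `S̃ - S`
with unit eigenvector `v`: from `K̃ - K = S̃(S̃ - S) + (S̃ - S)S` we get
`⟪v, (K̃ - K)v⟫ = μ (⟪v, S̃v⟫ + ⟪v, Sv⟫)`, and the bracket dominates `|μ| = |⟪v, S̃v⟫ - ⟪v, Sv⟫|`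
because both terms are nonnegative, so `μ² ≤ ‖K̃ - K‖₂`.
-/

open scoped ComplexOrder MatrixOrder Matrix.Norms.L2Operator

lemma specNorm_eq_l2_opNorm {N : ℕ} (A : Matrix (Fin N) (Fin N) ℝ) : specNorm A = ‖A‖ := rfl

lemma Matrix.PosSemidef.sqrt_eq_cfcSqrt {n 𝕜 : Type*} [Fintype n] [DecidableEq n] [RCLike 𝕜]
    {A : Matrix n n 𝕜} (hA : A.PosSemidef) : hA.sqrt = CFC.sqrt A := by
  rw [CFC.sqrt_eq_real_sqrt A hA.nonneg, cfcₙ_eq_cfc, hA.1.cfc_eq]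
  rfl

section Frobenius

variable {l m n : Type*} [Fintype l] [Fintype m] [Fintype n]

lemma frobNorm_nonneg (A : Matrix m n ℝ) : 0 ≤ frobNorm A := Real.sqrt_nonneg _

lemma frobNorm_eq_norm_toLp_uncurry (A : Matrix m n ℝ) :
    frobNorm A = ‖(WithLp.toLp 2 (Function.uncurry A) : EuclideanSpace ℝ (m × n))‖ := by
  simp [frobNorm, EuclideanSpace.norm_eq, Fintype.sum_prod_type]
  rfl

lemma frobNorm_add_le (A B : Matrix m n ℝ) : frobNorm (A + B) ≤ frobNorm A + frobNorm B := by
  have huncurry : Function.uncurry (A + B) = Function.uncurry A + Function.uncurry B := rfl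
  simp only [frobNorm_eq_norm_toLp_uncurry, huncurry, WithLp.toLp_add]
  exact norm_add_le _ _

lemma frobNorm_transpose (A : Matrix m n ℝ) : frobNorm Aᵀ = frobNorm A := by
  rw [frobNorm, frobNorm, Finset.sum_comm]
  rfl

lemma frobNorm_sq_eq_sum_norm_col_sq (A : Matrix m n ℝ) :
    frobNorm A ^ 2 = ∑ j, ‖(WithLp.toLp 2 (fun i => A i j) : EuclideanSpace ℝ m)‖ ^ 2 := by
  rw [frobNorm, Real.sq_sqrt (by positivity), Finset.sum_comm]
  simp [EuclideanSpace.norm_sq_eq]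

lemma frobNorm_sq_eq_trace_mul_transpose (A : Matrix m n ℝ) :
    frobNorm A ^ 2 = trace (A * Aᵀ) := by
  rw [frobNorm, Real.sq_sqrt (by positivity)]
  simp [trace, mul_apply, sq]

lemma frobNorm_mul_le_l2_opNorm_mul [DecidableEq m] (A : Matrix l m ℝ) (B : Matrix m n ℝ) :
    frobNorm (A * B) ≤ ‖A‖ * frobNorm B := by
  have hcol (j : n) : ‖(WithLp.toLp 2 (fun i => (A * B) i j) : EuclideanSpace ℝ l)‖ ^ 2 ≤
      ‖A‖ ^ 2 * ‖(WithLp.toLp 2 (fun i => B i j) : EuclideanSpace ℝ m)‖ ^ 2 := by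
    rw [← mul_pow]
    gcongr
    exact l2_opNorm_mulVec A (WithLp.toLp 2 fun i => B i j)
  rw [← pow_le_pow_iff_left₀ (frobNorm_nonneg _) (mul_nonneg (norm_nonneg _) (frobNorm_nonneg B))
    two_ne_zero, mul_pow, frobNorm_sq_eq_sum_norm_col_sq, frobNorm_sq_eq_sum_norm_col_sq,
    Finset.mul_sum]
  exact Finset.sum_le_sum fun j _ => hcol j

lemma frobNorm_mul_le_mul_l2_opNorm [DecidableEq m] [DecidableEq n] (A : Matrix l m ℝ)
    (B : Matrix m n ℝ) : frobNorm (A * B) ≤ frobNorm A * ‖B‖ := by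
  rw [← frobNorm_transpose, transpose_mul, ← frobNorm_transpose A, mul_comm,
    ← conjTranspose_eq_transpose_of_trivial B, ← l2_opNorm_conjTranspose B]
  exact frobNorm_mul_le_l2_opNorm_mul _ _

lemma frobNorm_mul_mul_sub_mul_mul_le [DecidableEq n] (X Y D : Matrix n n ℝ) :
    frobNorm (Y * D * Y - X * D * X) ≤ ‖D‖ * ‖Y - X‖ * (frobNorm Y + frobNorm X) := by
  have hsplit : Y * D * Y - X * D * X = Y * D * (Y - X) + (Y - X) * (D * X) := by noncomm_ring
  calc frobNorm (Y * D * Y - X * D * X)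
      ≤ frobNorm (Y * D) * ‖Y - X‖ + ‖Y - X‖ * frobNorm (D * X) := by
        rw [hsplit]
        exact (frobNorm_add_le _ _).trans
          (add_le_add (frobNorm_mul_le_mul_l2_opNorm _ _) (frobNorm_mul_le_l2_opNorm_mul _ _))
    _ ≤ frobNorm Y * ‖D‖ * ‖Y - X‖ + ‖Y - X‖ * (‖D‖ * frobNorm X) := by
        gcongr
        · exact frobNorm_mul_le_mul_l2_opNorm _ _
        · exact frobNorm_mul_le_l2_opNorm_mul _ _
    _ = ‖D‖ * ‖Y - X‖ * (frobNorm Y + frobNorm X) := by ring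

end Frobenius

namespace Matrix

variable {n : Type*} [Fintype n] [DecidableEq n]

lemma frobNorm_cfcSqrt {A : Matrix n n ℝ} (hA : 0 ≤ A) : frobNorm (CFC.sqrt A) = √(trace A) := by
  have hsymm : (CFC.sqrt A)ᵀ = CFC.sqrt A := by
    rw [← conjTranspose_eq_transpose_of_trivial]
    exact (CFC.sqrt_nonneg A).isSelfAdjoint.star_eq
  rw [← Real.sqrt_sq (frobNorm_nonneg _), frobNorm_sq_eq_trace_mul_transpose, hsymm,
    CFC.sqrt_mul_sqrt_self A]

lemma abs_dotProduct_mulVec_le_l2_opNorm (M : Matrix n n ℝ) (v : EuclideanSpace ℝ n) :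
    |v ⬝ᵥ M *ᵥ v| ≤ ‖M‖ * ‖v‖ ^ 2 := by
  rw [← inner_toEuclideanCLM]
  calc |inner ℝ v (toEuclideanCLM (𝕜 := ℝ) M v)| ≤ ‖v‖ * ‖toEuclideanCLM (𝕜 := ℝ) M v‖ :=
        abs_real_inner_le_norm _ _
    _ ≤ ‖v‖ * (‖M‖ * ‖v‖) := by gcongr; exact (toEuclideanCLM (𝕜 := ℝ) M).le_opNorm v
    _ = ‖M‖ * ‖v‖ ^ 2 := by ring

lemma sq_eigenvalue_cfcSqrt_sub_cfcSqrt_le {A B : Matrix n n ℝ} (hA : 0 ≤ A) (hB : 0 ≤ B)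
    {μ : ℝ} {v : EuclideanSpace ℝ n} (hv : ‖v‖ = 1)
    (hμ : (CFC.sqrt B - CFC.sqrt A) *ᵥ v = μ • ⇑v) : μ ^ 2 ≤ ‖B - A‖ := by
  set S := CFC.sqrt A
  set T := CFC.sqrt B
  set C := T - S
  have hC : Cᵀ = C := by
    rw [← conjTranspose_eq_transpose_of_trivial]
    exact ((CFC.sqrt_nonneg B).isSelfAdjoint.sub (CFC.sqrt_nonneg A).isSelfAdjoint).star_eq
  have hvv : (v : n → ℝ) ⬝ᵥ v = 1 := by
    rw [← one_pow 2, ← hv, ← real_inner_self_eq_norm_sq, EuclideanSpace.inner_eq_star_dotProduct,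
      star_trivial]
  set a := (v : n → ℝ) ⬝ᵥ S *ᵥ v
  set b := (v : n → ℝ) ⬝ᵥ T *ᵥ v
  have ha : 0 ≤ a := by
    simpa using (nonneg_iff_posSemidef.mp (CFC.sqrt_nonneg A)).dotProduct_mulVec_nonneg v
  have hb : 0 ≤ b := by
    simpa using (nonneg_iff_posSemidef.mp (CFC.sqrt_nonneg B)).dotProduct_mulVec_nonneg v
  have hμba : μ = b - a := by
    rw [← dotProduct_sub, ← sub_mulVec, hμ, dotProduct_smul, hvv, smul_eq_mul, mul_one]
  have hsplit : B - A = T * C + C * S := by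
    rw [show T * C + C * S = T * T - S * S by simp only [C]; noncomm_ring,
      CFC.sqrt_mul_sqrt_self B, CFC.sqrt_mul_sqrt_self A]
  have hquad : v ⬝ᵥ (B - A) *ᵥ v = μ * (b + a) := by
    rw [hsplit, add_mulVec, ← mulVec_mulVec, ← mulVec_mulVec, dotProduct_add, hμ, mulVec_smul,
      dotProduct_smul, dotProduct_mulVec (v : n → ℝ) C, ← mulVec_transpose, hC, hμ,
      smul_dotProduct]
    simp only [smul_eq_mul]
    ring
  have hbound := abs_dotProduct_mulVec_le_l2_opNorm (B - A) v
  rw [hv, hquad, one_pow, mul_one, abs_le] at hbound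
  rcases le_total 0 μ with h | h <;> nlinarith [hbound.1, hbound.2]

lemma l2_opNorm_cfcSqrt_sub_cfcSqrt_le {A B : Matrix n n ℝ} (hA : 0 ≤ A) (hB : 0 ≤ B) :
    ‖CFC.sqrt B - CFC.sqrt A‖ ≤ √‖B - A‖ := by
  have hC : (CFC.sqrt B - CFC.sqrt A).IsHermitian :=
    (CFC.sqrt_nonneg B).isSelfAdjoint.sub (CFC.sqrt_nonneg A).isSelfAdjoint
  rw [← cfc_id' ℝ (CFC.sqrt B - CFC.sqrt A) hC]
  refine norm_cfc_le (Real.sqrt_nonneg _) fun μ hμ => ?_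
  obtain ⟨i, rfl⟩ := hC.spectrum_real_eq_range_eigenvalues ▸ hμ
  rw [Real.norm_eq_abs, ← Real.sqrt_sq_eq_abs]
  exact Real.sqrt_le_sqrt <| sq_eigenvalue_cfcSqrt_sub_cfcSqrt_le hA hB
    (hC.eigenvectorBasis.orthonormal.1 i) (hC.mulVec_eigenvectorBasis i)

end Matrix

/-- If `K, K̃` are symmetric PSD with `‖K̃ − K‖₂ ≤ ε²`, both traces at most `1+ρ`,
and `D` is diagonal with `±1` entries, then
`‖√K̃ D √K̃ − √K D √K‖_F ≤ 2(1+ρ)ε`. -/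
theorem sqrt_conjugation_perturbation (N : ℕ)
    (K Kt : Matrix (Fin N) (Fin N) ℝ) (hK : K.PosSemidef) (hKt : Kt.PosSemidef)
    (ρ ε : ℝ) (hρ : 0 ≤ ρ) (hε : 0 ≤ ε)
    (hnorm : specNorm (Kt - K) ≤ ε ^ 2)
    (htr : K.trace ≤ 1 + ρ) (htrt : Kt.trace ≤ 1 + ρ)
    (dv : Fin N → ℝ) (hdv : ∀ i, dv i = 1 ∨ dv i = -1) :
    frobNorm (hKt.sqrt * Matrix.diagonal dv * hKt.sqrt -
        hK.sqrt * Matrix.diagonal dv * hK.sqrt) ≤ 2 * (1 + ρ) * ε := by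
  have hD : ‖diagonal dv‖ ≤ 1 := by
    rw [l2_opNorm_diagonal, pi_norm_le_iff_of_nonneg zero_le_one]
    intro i
    rcases hdv i with h | h <;> simp [h]
  have hsqrt : ‖hKt.sqrt - hK.sqrt‖ ≤ ε := by
    rw [specNorm_eq_l2_opNorm] at hnorm
    rw [hK.sqrt_eq_cfcSqrt, hKt.sqrt_eq_cfcSqrt, ← Real.sqrt_sq hε]
    exact (l2_opNorm_cfcSqrt_sub_cfcSqrt_le hK.nonneg hKt.nonneg).trans (Real.sqrt_le_sqrt hnorm)
  have hfrob {A : Matrix (Fin N) (Fin N) ℝ} (hA : A.PosSemidef) (htrA : A.trace ≤ 1 + ρ) :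
      frobNorm hA.sqrt ≤ 1 + ρ := by
    rw [hA.sqrt_eq_cfcSqrt, frobNorm_cfcSqrt hA.nonneg, Real.sqrt_le_iff]
    constructor <;> nlinarith
  calc _ ≤ ‖diagonal dv‖ * ‖hKt.sqrt - hK.sqrt‖ * (frobNorm hKt.sqrt + frobNorm hK.sqrt) :=
        frobNorm_mul_mul_sub_mul_mul_le _ _ _
    _ ≤ 1 * ε * ((1 + ρ) + (1 + ρ)) := by
        gcongr
        exacts [add_nonneg (frobNorm_nonneg _) (frobNorm_nonneg _), hfrob hKt htrt, hfrob hK htr]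
    _ = 2 * (1 + ρ) * ε := by ring
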